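/- Fix ρ > 0 and z ∈ ℂ. Then, as τ₁ → −∞ and τ₂ → +∞, the two-sided hard edge scaling limit converges to the free boundary scaling limit: lim ∫_{−ρ/2}^{ρ/2} e^{−(2·Re z − ξ)²/2} / (∫_{(ρ/2)(2τ₁−1)}^{(ρ/2)(2τ₂−1)} e^{−(t−ξ)²/2} dt) dξ = (1/√(2π)) ∫_{−ρ/2}^{ρ/2} e^{−(2·Re z − ξ)²/2} dξ. -/

import Mathlib

open Filter MeasureTheory Real

noncomputable section

/-- The two-sided hard edge scaling limit `R^{τ₁,τ₂}`. -/
def Rlim2 (ρ τ1 τ2 : ℝ) (z : ℂ) : ℝ :=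
  ∫ ξ in (-(ρ/2))..(ρ/2),
    Real.exp (-(2 * z.re - ξ)^2 / 2) /
      ∫ t in (ρ/2 * (2*τ1 - 1))..(ρ/2 * (2*τ2 - 1)), Real.exp (-(t - ξ)^2 / 2)

/-- The free boundary scaling limit
`R^{(1)}(z) = (1/√(2π)) ∫_{-ρ/2}^{ρ/2} e^{-(2 Re z - ξ)²/2} dξ`. -/
def Rone (ρ : ℝ) (z : ℂ) : ℝ :=
  (Real.sqrt (2 * π))⁻¹ * ∫ ξ in (-(ρ/2))..(ρ/2), Real.exp (-(2 * z.re - ξ)^2 / 2)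


open Topology Interval

/-! The denominator of `Rlim2` is the Gaussian mass of the window `[ρ(τ₁ - 1/2), ρ(τ₂ - 1/2)]`
seen from `ξ`. It tends to `√(2π)` for every `ξ`, and once the window contains
`[-ρ/2 - 1, ρ/2 + 1]` it is at least `2e^{-1/2}` uniformly in `ξ ∈ [-ρ/2, ρ/2]`, so dominated
convergence passes the limit inside the outer integral. -/

theorem tendsto_intervalIntegral_div_of_le {ι : Type*} {l : Filter ι} [l.IsCountablyGenerated]
    {μ : Measure ℝ} {f : ℝ → ℝ} {g : ι → ℝ → ℝ} {α β c L : ℝ}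
    (hf : IntervalIntegrable f μ α β)
    (hg : ∀ᶠ p in l, AEStronglyMeasurable (g p) (μ.restrict (Ι α β)))
    (hc : 0 < c) (hgc : ∀ᶠ p in l, ∀ ξ ∈ Ι α β, c ≤ g p ξ)
    (hlim : ∀ ξ ∈ Ι α β, Tendsto (fun p => g p ξ) l (𝓝 L)) (hL : L ≠ 0) :
    Tendsto (fun p => ∫ ξ in α..β, f ξ / g p ξ ∂μ) l (𝓝 (∫ ξ in α..β, f ξ / L ∂μ)) := by
  refine intervalIntegral.tendsto_integral_filter_of_dominated_convergence (fun ξ => ‖f ξ‖ / c)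
    ?_ ?_ (hf.norm.div_const c) (ae_of_all _ fun ξ hξ => tendsto_const_nhds.div (hlim ξ hξ) hL)
  · filter_upwards [hg] with p hp
    exact (hf.def'.aemeasurable.div hp.aemeasurable).aestronglyMeasurable
  · filter_upwards [hgc] with p hp
    refine ae_of_all _ fun ξ hξ => ?_
    rw [norm_div, Real.norm_of_nonneg (hc.trans_le (hp ξ hξ)).le]
    exact div_le_div_of_nonneg_left (norm_nonneg _) hc (hp ξ hξ)

def gaussianMass (a b ξ : ℝ) : ℝ :=
  ∫ t in a..b, exp (-(t - ξ) ^ 2 / 2)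

lemma integrable_exp_neg_sq_div_two (ξ : ℝ) : Integrable fun t : ℝ => exp (-(t - ξ) ^ 2 / 2) := by
  have h := (integrable_exp_neg_mul_sq (show (0 : ℝ) < 1 / 2 by norm_num)).comp_sub_right ξ
  convert h using 3; ring

lemma integral_exp_neg_sq_div_two (ξ : ℝ) : ∫ t : ℝ, exp (-(t - ξ) ^ 2 / 2) = √(2 * π) := by
  have h : ∀ t : ℝ, exp (-(t - ξ) ^ 2 / 2) = exp (-(1 / 2) * (t - ξ) ^ 2) := fun t => by ring_nf
  simp_rw [h]
  rw [integral_sub_right_eq_self (fun t => exp (-(1 / 2) * t ^ 2)) ξ, integral_gaussian]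
  norm_num [div_div_eq_mul_div, mul_comm]

lemma continuous_gaussianMass (a b : ℝ) : Continuous (gaussianMass a b) :=
  intervalIntegral.continuous_parametric_intervalIntegral_of_continuous' (by fun_prop) a b

lemma two_mul_exp_neg_half_le_gaussianMass {a b ξ : ℝ} (ha : a ≤ ξ - 1) (hb : ξ + 1 ≤ b) :
    2 * exp (-1 / 2) ≤ gaussianMass a b ξ := by
  have hcont : Continuous fun t : ℝ => exp (-(t - ξ) ^ 2 / 2) := by fun_prop
  calc 2 * exp (-1 / 2) = ∫ _ in (ξ - 1)..(ξ + 1), exp (-1 / 2) := by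
        rw [intervalIntegral.integral_const, smul_eq_mul]; ring
    _ ≤ ∫ t in (ξ - 1)..(ξ + 1), exp (-(t - ξ) ^ 2 / 2) := by
      refine intervalIntegral.integral_mono_on (by linarith) intervalIntegrable_const
        (hcont.intervalIntegrable _ _) fun t ht => exp_le_exp.mpr ?_
      have : (t - ξ) ^ 2 ≤ 1 := by nlinarith [ht.1, ht.2]
      linarith
    _ ≤ gaussianMass a b ξ :=
      intervalIntegral.integral_mono_interval ha (by linarith) hb
        (ae_of_all _ fun t => (exp_pos _).le) (hcont.intervalIntegrable a b)

lemma tendsto_gaussianMass {ι : Type*} {l : Filter ι} [l.IsCountablyGenerated] {a b : ι → ℝ}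
    (ha : Tendsto a l atBot) (hb : Tendsto b l atTop) (ξ : ℝ) :
    Tendsto (fun p => gaussianMass (a p) (b p) ξ) l (𝓝 √(2 * π)) := by
  rw [← integral_exp_neg_sq_div_two ξ]
  exact intervalIntegral_tendsto_integral (integrable_exp_neg_sq_div_two ξ) ha hb

lemma tendsto_half_mul_two_mul_sub_one_atTop {ρ : ℝ} (hρ : 0 < ρ) :
    Tendsto (fun τ : ℝ => ρ / 2 * (2 * τ - 1)) atTop atTop := by
  have := tendsto_atTop_add_const_right atTop (-(ρ / 2)) (tendsto_id.const_mul_atTop hρ)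
  exact this.congr fun τ => by simp only [id_eq]; ring

lemma tendsto_half_mul_two_mul_sub_one_atBot {ρ : ℝ} (hρ : 0 < ρ) :
    Tendsto (fun τ : ℝ => ρ / 2 * (2 * τ - 1)) atBot atBot := by
  have := tendsto_atBot_add_const_right atBot (-(ρ / 2)) (tendsto_id.const_mul_atBot hρ)
  exact this.congr fun τ => by simp only [id_eq]; ring

/-- **(Recovering the free boundary limit from the two-sided hard edge limit.)** For fixed
`ρ > 0` and `z ∈ ℂ`, as `τ₁ → -∞` and `τ₂ → +∞`, the two-sided hard edge scaling limit
`R^{τ₁,τ₂}(z)` converges to the free boundary scaling limit `R^{(1)}(z)`. -/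
theorem hard_edge_to_free_boundary_limit (ρ : ℝ) (hρ : 0 < ρ) (z : ℂ) :
    Tendsto (fun p : ℝ × ℝ => Rlim2 ρ p.1 p.2 z) (atBot ×ˢ atTop)
      (nhds (Rone ρ z)) := by
  set a := fun p : ℝ × ℝ => ρ / 2 * (2 * p.1 - 1)
  set b := fun p : ℝ × ℝ => ρ / 2 * (2 * p.2 - 1)
  have ha : Tendsto a (atBot ×ˢ atTop) atBot :=
    (tendsto_half_mul_two_mul_sub_one_atBot hρ).comp tendsto_fst
  have hb : Tendsto b (atBot ×ˢ atTop) atTop :=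
    (tendsto_half_mul_two_mul_sub_one_atTop hρ).comp tendsto_snd
  have hwide : ∀ᶠ p in atBot ×ˢ atTop, ∀ ξ ∈ Ι (-(ρ / 2)) (ρ / 2),
      2 * exp (-1 / 2) ≤ gaussianMass (a p) (b p) ξ := by
    filter_upwards [ha.eventually_le_atBot (-(ρ / 2) - 1), hb.eventually_ge_atTop (ρ / 2 + 1)]
      with p hap hbp ξ hξ
    rw [Set.uIoc_of_le (by linarith)] at hξ
    exact two_mul_exp_neg_half_le_gaussianMass (by linarith [hξ.1]) (by linarith [hξ.2])
  have hlim := tendsto_intervalIntegral_div_of_le (μ := volume)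
    (f := fun ξ => exp (-(2 * z.re - ξ) ^ 2 / 2)) (Continuous.intervalIntegrable (by fun_prop) _ _)
    (.of_forall fun p => (continuous_gaussianMass _ _).aestronglyMeasurable) (by positivity) hwide
    (fun ξ _ => tendsto_gaussianMass ha hb ξ) (by positivity)
  rw [Rone, inv_mul_eq_div, ← intervalIntegral.integral_div]
  exact hlim
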